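/- For a hyperbolic triangle with side lengths r₁+r₂, r₂+r₃, r₃+r₁ and angle θ_i opposite side r_j+r_k: if (r_i, r_j, r_k) → (0, f_j, f_k) with f_j, f_k > 0, then θ_i → π. -/

import Mathlib

open Real Filter Topology

/-- The angle at the vertex of radius `x` in the hyperbolic triangle with side
lengths `x+y`, `x+z`, `y+z` (hyperbolic circle packing triangle). -/
noncomputable def hypPackAngle (x y z : ℝ) : ℝ :=
  Real.arccos ((Real.cosh (x + y) * Real.cosh (x + z) - Real.cosh (y + z)) /
    (Real.sinh (x + y) * Real.sinh (x + z)))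

theorem continuousAt_hypPackAngle {x y z : ℝ} (h : sinh (x + y) * sinh (x + z) ≠ 0) :
    ContinuousAt (fun p : ℝ × ℝ × ℝ => hypPackAngle p.1 p.2.1 p.2.2) (x, y, z) :=
  continuous_arccos.continuousAt.comp (ContinuousAt.div (by fun_prop) (by fun_prop) h)

/-- A degenerate triangle: with `x = 0` the two sides at the vertex are collinear. -/
theorem hypPackAngle_zero_left {y z : ℝ} (hy : y ≠ 0) (hz : z ≠ 0) :
    hypPackAngle 0 y z = π := by
  have hden : sinh y * sinh z ≠ 0 :=
    mul_ne_zero (sinh_ne_zero.2 hy) (sinh_ne_zero.2 hz)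
  have hcos : (cosh y * cosh z - cosh (y + z)) / (sinh y * sinh z) = -1 := by
    rw [div_eq_iff hden, cosh_add]
    ring
  simp only [hypPackAngle, zero_add, hcos, arccos_neg_one]

theorem hyp_pack_angle_tendsto_pi (f2 f3 : ℝ) (hf2 : 0 < f2) (hf3 : 0 < f3) :
    Tendsto (fun p : ℝ × ℝ × ℝ => hypPackAngle p.1 p.2.1 p.2.2)
      (nhdsWithin (0, f2, f3) {p : ℝ × ℝ × ℝ | 0 < p.1 ∧ 0 < p.2.1 ∧ 0 < p.2.2})
      (nhds π) := by
  have hden : sinh (0 + f2) * sinh (0 + f3) ≠ 0 := by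
    rw [zero_add, zero_add]
    exact (mul_pos (sinh_pos_iff.2 hf2) (sinh_pos_iff.2 hf3)).ne'
  have hcont := (continuousAt_hypPackAngle hden).tendsto
  rw [hypPackAngle_zero_left hf2.ne' hf3.ne'] at hcont
  exact tendsto_nhdsWithin_of_tendsto_nhds hcont
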